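/- For x > 0 define w(x) = e^{1/(2x²)} · ∫_0^x e^{-1/(2t²)} · t^{-2} dt (the integrand extended by 0 at t = 0), and for k ∈ ℕ let (2k−1)!! = ∏_{j=1}^{k} (2j−1) (with (−1)!! = 1). Then for every x > 0 and every natural number N, 0 ≤ (−1)^N · ( w(x) − ∑_{k=0}^{N-1} (−1)^k · (2k−1)!! · x^{2k+1} ) ≤ (2N−1)!! · x^{2N+1}. -/

import Mathlib

/-!
Write `φ(t) = e^{-1/(2t²)} / t²`. Integrating by parts against the primitive `t^{2k+1} e^{-1/(2t²)}`
of `(t^{2k} + (2k+1) t^{2k+2}) φ(t)` shows that the remainders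
`R_k(x) = e^{1/(2x²)} ∫_0^x t^{2k} φ(t) dt` satisfy `R_k = x^{2k+1} - (2k+1) R_{k+1}`.
As `w = R_0`, unrolling this expresses the error of the `N`-th partial sum `S_N` as
`w - S_N = (-1)^N (2N-1)!! R_N`, and since every `R_k` is nonnegative
the same recursion bounds `R_N` by `x^{2N+1}`.
-/

/-- The double factorial `(2k-1)!! = 1·3·5⋯(2k-1)`, with `(-1)!! = 1` for `k = 0`. -/
def oddDoubleFactorial (k : ℕ) : ℝ := ∏ j ∈ Finset.range k, (2 * (j : ℝ) + 1)

open Real MeasureTheory Set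

lemma oddDoubleFactorial_succ (k : ℕ) :
    oddDoubleFactorial (k + 1) = oddDoubleFactorial k * (2 * k + 1) :=
  Finset.prod_range_succ _ k

lemma oddDoubleFactorial_nonneg (k : ℕ) : 0 ≤ oddDoubleFactorial k :=
  Finset.prod_nonneg fun _ _ => by positivity

lemma exp_neg_one_div_le_factorial_mul_pow (n : ℕ) {s : ℝ} (hs : 0 < s) :
    exp (-1 / s) ≤ n.factorial * s ^ n := by
  have h := pow_div_factorial_le_exp (1 / s) (one_div_pos.mpr hs).le n
  rw [neg_div, exp_neg, inv_le_comm₀ (exp_pos _) (by positivity)]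
  calc (n.factorial * s ^ n)⁻¹
      _ = (1 / s) ^ n / n.factorial := by rw [div_pow, one_pow]; field_simp
      _ ≤ exp (1 / s) := h

noncomputable def eulerKernel (t : ℝ) : ℝ := exp (-1 / (2 * t ^ 2)) / t ^ 2

lemma eulerKernel_nonneg (t : ℝ) : 0 ≤ eulerKernel t := by unfold eulerKernel; positivity

lemma eulerKernel_le (t : ℝ) : eulerKernel t ≤ 8 * t ^ 2 := by
  rcases eq_or_ne t 0 with rfl | ht
  · simp [eulerKernel]
  have h := exp_neg_one_div_le_factorial_mul_pow 2 (by positivity : 0 < 2 * t ^ 2)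
  rw [eulerKernel, div_le_iff₀ (by positivity)]
  norm_num [Nat.factorial] at h
  linarith

-- `eulerKernel 0 = 0` only through the junk value `x / 0 = 0`; it happens to be the limit.
lemma continuous_eulerKernel : Continuous eulerKernel := by
  rw [continuous_iff_continuousAt]
  intro t
  rcases eq_or_ne t 0 with rfl | ht
  · have h0 : eulerKernel 0 = 0 := by simp [eulerKernel]
    rw [ContinuousAt, h0]
    refine squeeze_zero eulerKernel_nonneg eulerKernel_le ?_
    have h : Continuous fun t : ℝ => 8 * t ^ 2 := by fun_prop
    simpa using h.tendsto 0
  · unfold eulerKernel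
    fun_prop (disch := positivity)

lemma pow_mul_exp_eq_pow_mul_eulerKernel (k : ℕ) (t : ℝ) :
    t ^ (2 * k + 1) * exp (-1 / (2 * t ^ 2)) = t ^ (2 * k + 3) * eulerKernel t := by
  rcases eq_or_ne t 0 with rfl | ht
  · simp
  · rw [eulerKernel]; field_simp; ring

lemma hasDerivAt_pow_mul_exp (k : ℕ) {t : ℝ} (ht : t ≠ 0) :
    HasDerivAt (fun t => t ^ (2 * k + 1) * exp (-1 / (2 * t ^ 2)))
      (t ^ (2 * k) * eulerKernel t + (2 * k + 1) * (t ^ (2 * (k + 1)) * eulerKernel t)) t := by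
  have hpow : HasDerivAt (fun t : ℝ => t ^ (2 * k + 1)) ((2 * k + 1) * t ^ (2 * k)) t := by
    simpa using hasDerivAt_pow (2 * k + 1) t
  have hexp :
      HasDerivAt (fun t : ℝ => exp (-1 / (2 * t ^ 2))) (exp (-1 / (2 * t ^ 2)) / t ^ 3) t := by
    have hsq := (hasDerivAt_pow 2 t).const_mul 2
    refine ((hasDerivAt_const t (-1 : ℝ)).div hsq (by positivity)).exp.congr_deriv ?_
    simp only [Pi.div_apply]; field_simp; ring
  refine (hpow.mul hexp).congr_deriv ?_
  rw [eulerKernel]; field_simp; ring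

lemma integral_pow_mul_eulerKernel (k : ℕ) {x : ℝ} (hx : 0 ≤ x) :
    ∫ t in (0 : ℝ)..x, t ^ (2 * k) * eulerKernel t =
      x ^ (2 * k + 1) * exp (-1 / (2 * x ^ 2)) -
        (2 * k + 1) * ∫ t in (0 : ℝ)..x, t ^ (2 * (k + 1)) * eulerKernel t := by
  have hint (j : ℕ) : IntervalIntegrable (fun t => t ^ (2 * j) * eulerKernel t) volume 0 x :=
    ((continuous_pow _).mul continuous_eulerKernel).intervalIntegrable 0 x
  have hcont : Continuous fun t : ℝ => t ^ (2 * k + 1) * exp (-1 / (2 * t ^ 2)) := by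
    simp only [pow_mul_exp_eq_pow_mul_eulerKernel]
    exact (continuous_pow _).mul continuous_eulerKernel
  have h := intervalIntegral.integral_eq_sub_of_hasDerivAt_of_le hx hcont.continuousOn
    (fun t ht => hasDerivAt_pow_mul_exp k ht.1.ne') ((hint k).add ((hint (k + 1)).const_mul _))
  rw [intervalIntegral.integral_add (hint k) ((hint (k + 1)).const_mul _),
    intervalIntegral.integral_const_mul, zero_pow (Nat.succ_ne_zero _), zero_mul, sub_zero] at h
  linarith

noncomputable def eulerRemainder (k : ℕ) (x : ℝ) : ℝ :=
  exp (1 / (2 * x ^ 2)) * ∫ t in (0 : ℝ)..x, t ^ (2 * k) * eulerKernel t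

lemma eulerRemainder_nonneg (k : ℕ) {x : ℝ} (hx : 0 ≤ x) : 0 ≤ eulerRemainder k x :=
  mul_nonneg (exp_pos _).le <| intervalIntegral.integral_nonneg hx fun t _ =>
    mul_nonneg ((even_two_mul k).pow_nonneg t) (eulerKernel_nonneg t)

lemma eulerRemainder_eq (k : ℕ) {x : ℝ} (hx : 0 ≤ x) :
    eulerRemainder k x = x ^ (2 * k + 1) - (2 * k + 1) * eulerRemainder (k + 1) x := by
  have hexp : exp (1 / (2 * x ^ 2)) * exp (-1 / (2 * x ^ 2)) = 1 := by
    rw [← exp_add, neg_div, add_neg_cancel, exp_zero]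
  rw [eulerRemainder, eulerRemainder, integral_pow_mul_eulerKernel k hx]
  linear_combination x ^ (2 * k + 1) * hexp

lemma eulerRemainder_le (k : ℕ) {x : ℝ} (hx : 0 ≤ x) : eulerRemainder k x ≤ x ^ (2 * k + 1) := by
  have hnext := eulerRemainder_nonneg (k + 1) hx
  rw [eulerRemainder_eq k hx, sub_le_self_iff]
  positivity

lemma eulerRemainder_zero_eq_sum_add (N : ℕ) {x : ℝ} (hx : 0 ≤ x) :
    eulerRemainder 0 x =
      ∑ k ∈ Finset.range N, (-1 : ℝ) ^ k * oddDoubleFactorial k * x ^ (2 * k + 1) +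
        (-1 : ℝ) ^ N * oddDoubleFactorial N * eulerRemainder N x := by
  induction N with
  | zero => simp [oddDoubleFactorial]
  | succ N ih =>
    rw [ih, Finset.sum_range_succ, eulerRemainder_eq N hx, oddDoubleFactorial_succ]
    ring

theorem euler_asymptotic_error_bound :
    ∀ x : ℝ, 0 < x → ∀ N : ℕ,
      0 ≤ (-1 : ℝ) ^ N *
          ((Real.exp (1 / (2 * x ^ 2)) *
              ∫ t in Set.Ioo (0 : ℝ) x, Real.exp (-1 / (2 * t ^ 2)) / t ^ 2) -
            ∑ k ∈ Finset.range N, (-1 : ℝ) ^ k * oddDoubleFactorial k * x ^ (2 * k + 1)) ∧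
      (-1 : ℝ) ^ N *
          ((Real.exp (1 / (2 * x ^ 2)) *
              ∫ t in Set.Ioo (0 : ℝ) x, Real.exp (-1 / (2 * t ^ 2)) / t ^ 2) -
            ∑ k ∈ Finset.range N, (-1 : ℝ) ^ k * oddDoubleFactorial k * x ^ (2 * k + 1)) ≤
        oddDoubleFactorial N * x ^ (2 * N + 1) := by
  intro x hx N
  have hw : exp (1 / (2 * x ^ 2)) * ∫ t in Ioo (0 : ℝ) x, exp (-1 / (2 * t ^ 2)) / t ^ 2 =
      eulerRemainder 0 x := by
    rw [eulerRemainder, intervalIntegral.integral_of_le hx.le, integral_Ioc_eq_integral_Ioo]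
    simp [eulerKernel]
  have hsign : (-1 : ℝ) ^ N * ((-1 : ℝ) ^ N * oddDoubleFactorial N * eulerRemainder N x) =
      oddDoubleFactorial N * eulerRemainder N x := by
    rw [← mul_assoc, ← mul_assoc, ← mul_pow]; norm_num
  rw [hw, eulerRemainder_zero_eq_sum_add N hx.le, add_sub_cancel_left, hsign]
  exact ⟨mul_nonneg (oddDoubleFactorial_nonneg N) (eulerRemainder_nonneg N hx.le),
    mul_le_mul_of_nonneg_left (eulerRemainder_le N hx.le) (oddDoubleFactorial_nonneg N)⟩
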